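/- Let A be an n×n Hermitian positive definite matrix, r₀ ∈ ℂⁿ nonzero, and m ≥ 1. Let r_m be the GMRES residual after m steps, i.e., r_m = r₀ − A Δf where Δf minimizes ‖r₀ − A Δf‖ over the Krylov subspace span{r₀, A r₀, …, A^{m−1} r₀}. Then ‖r_m‖² = ‖r₀‖² − ‖A Δf*‖², where Δf* is the minimizer, and the ratio ‖r_m‖²/‖r₀‖² ≤ 1 − ε_m with ε_m = Σ_{j=1}^m |r̄₀^H A^j r̄₀|² / tr(K̄^H K̄) > 0, where r̄₀ = r₀/‖r₀‖ and K̄ = [A r̄₀, …, A^m r̄₀]. Hence restarted GMRES with any restart length m ≥ 1 strictly reduces the residual norm at each restart cycle. -/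

import Mathlib

/-!
With `𝒦_m` the Krylov subspace, the minimiser `A Δf` is the orthogonal projection of `r₀` onto
`A 𝒦_m`, so the residual is orthogonal to `A 𝒦_m` and Pythagoras gives
`‖r_m‖² = ‖r₀‖² - ‖A Δf‖²`. Every `Aʲ r̄₀` with `1 ≤ j ≤ m` lies in `A 𝒦_m`, hence
`|r̄₀ᴴ Aʲ r̄₀| = |⟪P r̄₀, Aʲ r̄₀⟫| ≤ ‖P r̄₀‖ ‖Aʲ r̄₀‖` for the projection `P`; summing squares
gives `ε_m ≤ ‖A Δf‖² / ‖r₀‖²`. Positive definiteness makes the `j = 1` term `r̄₀ᴴ A r̄₀`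
positive, so `ε_m > 0`.
-/

open Matrix ComplexOrder

/-- Euclidean norm of a complex vector. -/
noncomputable def enorm' {n : ℕ} (x : Fin n → ℂ) : ℝ :=
  Real.sqrt (∑ i, ‖x i‖ ^ 2)

open scoped InnerProductSpace

section LeastSquares

variable {𝕜 E V : Type*} [RCLike 𝕜] [NormedAddCommGroup E] [InnerProductSpace 𝕜 E]
  [AddCommGroup V] [Module 𝕜 V]

theorem inner_sub_map_eq_zero_of_forall_norm_sub_le (L : V →ₗ[𝕜] E) {S : Submodule 𝕜 V}
    {u : E} {x : V} (hx : x ∈ S) (hmin : ∀ g ∈ S, ‖u - L x‖ ≤ ‖u - L g‖) {g : V}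
    (hg : g ∈ S) : ⟪u - L x, L g⟫_𝕜 = 0 := by
  have hmin' : ‖u - L x‖ = ⨅ w : S.map L, ‖u - w‖ := by
    have hbdd : BddBelow (Set.range fun w : S.map L => ‖u - w‖) :=
      ⟨0, Set.forall_mem_range.2 fun _ => norm_nonneg _⟩
    refine le_antisymm (le_ciInf ?_) (ciInf_le hbdd ⟨L x, S.mem_map_of_mem hx⟩)
    rintro ⟨_, y, hy, rfl⟩
    exact hmin y hy
  exact (Submodule.norm_eq_iInf_iff_inner_eq_zero _ (S.mem_map_of_mem hx)).1 hmin' _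
    (S.mem_map_of_mem hg)

theorem norm_sub_sq_eq_of_inner_sub_eq_zero {u d : E} (h : ⟪u - d, d⟫_𝕜 = 0) :
    ‖u - d‖ ^ 2 = ‖u‖ ^ 2 - ‖d‖ ^ 2 := by
  have := norm_add_sq_eq_norm_sq_add_norm_sq_of_inner_eq_zero _ _ h
  rw [sub_add_cancel] at this
  linarith

theorem sum_norm_inner_sq_le_of_inner_sub_eq_zero {ι : Type*} (s : Finset ι) (w : ι → E)
    {u d : E} (h : ∀ j ∈ s, ⟪u - d, w j⟫_𝕜 = 0) :
    ∑ j ∈ s, ‖⟪u, w j⟫_𝕜‖ ^ 2 ≤ ‖d‖ ^ 2 * ∑ j ∈ s, ‖w j‖ ^ 2 := by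
  rw [Finset.mul_sum]
  refine Finset.sum_le_sum fun j hj => ?_
  have huw : ⟪u, w j⟫_𝕜 = ⟪d, w j⟫_𝕜 := by rw [← sub_eq_zero, ← inner_sub_left, h j hj]
  rw [huw, ← mul_pow]
  exact pow_le_pow_left₀ (norm_nonneg _) (norm_inner_le_norm _ _) 2

end LeastSquares

section Krylov

variable {R ι : Type*} [CommRing R] [Fintype ι] [DecidableEq ι]

def krylovSubspace (A : Matrix ι ι R) (r : ι → R) (m : ℕ) : Submodule R (ι → R) :=
  Submodule.span R (Set.range fun i : Fin m => (A ^ (i : ℕ)) *ᵥ r)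

theorem pow_mulVec_mem_krylovSubspace (A : Matrix ι ι R) (r : ι → R) {m i : ℕ} (hi : i < m) :
    (A ^ i) *ᵥ r ∈ krylovSubspace A r m :=
  Submodule.subset_span ⟨⟨i, hi⟩, rfl⟩

theorem pow_mulVec_mem_map_krylovSubspace (A : Matrix ι ι R) (r : ι → R) {m j : ℕ}
    (hj : j ∈ Finset.Icc 1 m) : (A ^ j) *ᵥ r ∈ (krylovSubspace A r m).map A.mulVecLin := by
  obtain ⟨i, rfl⟩ := Nat.exists_eq_add_of_le' (Finset.mem_Icc.1 hj).1
  refine ⟨_, pow_mulVec_mem_krylovSubspace A r (i := i) (by grind), ?_⟩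
  rw [mulVecLin_apply, mulVec_mulVec, pow_succ']

end Krylov

theorem Matrix.PosDef.sum_norm_star_dotProduct_pow_mulVec_sq_pos {𝕜 ι : Type*} [RCLike 𝕜]
    [Fintype ι] [DecidableEq ι] {A : Matrix ι ι 𝕜} (hA : A.PosDef) {x : ι → 𝕜} (hx : x ≠ 0)
    {m : ℕ} (hm : 1 ≤ m) :
    0 < ∑ j ∈ Finset.Icc 1 m, ‖star x ⬝ᵥ (A ^ j) *ᵥ x‖ ^ 2 := by
  refine Finset.sum_pos' (fun _ _ => by positivity) ⟨1, Finset.mem_Icc.2 ⟨le_rfl, hm⟩, ?_⟩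
  rw [pow_one]
  exact pow_pos (norm_pos_iff.2 (hA.dotProduct_mulVec_pos hx).ne') 2

section GMRES

variable {n m : ℕ} {A : Matrix (Fin n) (Fin n) ℂ} {r₀ Δf : Fin n → ℂ}

theorem enorm'_eq_norm_toLp (x : Fin n → ℂ) :
    enorm' x = ‖(WithLp.toLp 2 x : EuclideanSpace ℂ (Fin n))‖ := by
  rw [EuclideanSpace.norm_eq]
  rfl

theorem inner_toLp_gmres_residual_eq_zero (hmem : Δf ∈ krylovSubspace A r₀ m)
    (hopt : ∀ g ∈ krylovSubspace A r₀ m, enorm' (r₀ - A *ᵥ Δf) ≤ enorm' (r₀ - A *ᵥ g))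
    {w : Fin n → ℂ} (hw : w ∈ (krylovSubspace A r₀ m).map A.mulVecLin) :
    ⟪(WithLp.toLp 2 (r₀ - A *ᵥ Δf) : EuclideanSpace ℂ (Fin n)), WithLp.toLp 2 w⟫_ℂ = 0 := by
  obtain ⟨g, hg, rfl⟩ := hw
  let L := (WithLp.linearEquiv 2 ℂ (Fin n → ℂ)).symm.toLinearMap ∘ₗ A.mulVecLin
  refine inner_sub_map_eq_zero_of_forall_norm_sub_le L hmem (fun g hg => ?_) hg
  simpa [L, enorm'_eq_norm_toLp] using hopt g hg

theorem gmres_residual_norm_sq (hmem : Δf ∈ krylovSubspace A r₀ m)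
    (hopt : ∀ g ∈ krylovSubspace A r₀ m, enorm' (r₀ - A *ᵥ Δf) ≤ enorm' (r₀ - A *ᵥ g)) :
    enorm' (r₀ - A *ᵥ Δf) ^ 2 = enorm' r₀ ^ 2 - enorm' (A *ᵥ Δf) ^ 2 := by
  have h := inner_toLp_gmres_residual_eq_zero hmem hopt (Submodule.mem_map_of_mem hmem)
  simp only [enorm'_eq_norm_toLp, WithLp.toLp_sub] at h ⊢
  exact norm_sub_sq_eq_of_inner_sub_eq_zero h

theorem gmres_sum_norm_sq_le (hmem : Δf ∈ krylovSubspace A r₀ m)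
    (hopt : ∀ g ∈ krylovSubspace A r₀ m, enorm' (r₀ - A *ᵥ Δf) ≤ enorm' (r₀ - A *ᵥ g))
    (a : ℂ) :
    ∑ j ∈ Finset.Icc 1 m, ‖star (a • r₀) ⬝ᵥ (A ^ j) *ᵥ (a • r₀)‖ ^ 2 ≤
      (‖a‖ * enorm' (A *ᵥ Δf)) ^ 2 *
        ∑ j ∈ Finset.Icc 1 m, enorm' ((A ^ j) *ᵥ (a • r₀)) ^ 2 := by
  have h := sum_norm_inner_sq_le_of_inner_sub_eq_zero (Finset.Icc 1 m)
    (fun j => (WithLp.toLp 2 ((A ^ j) *ᵥ (a • r₀)) : EuclideanSpace ℂ (Fin n)))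
    (u := WithLp.toLp 2 (a • r₀)) (d := a • WithLp.toLp 2 (A *ᵥ Δf)) fun j hj => by
      rw [← WithLp.toLp_smul, ← WithLp.toLp_sub, ← smul_sub, WithLp.toLp_smul, inner_smul_left,
        inner_toLp_gmres_residual_eq_zero hmem hopt, mul_zero]
      rw [mulVec_smul]
      exact Submodule.smul_mem _ _ (pow_mulVec_mem_map_krylovSubspace A r₀ hj)
  simpa only [EuclideanSpace.inner_toLp_toLp, dotProduct_comm, norm_smul,
    ← enorm'_eq_norm_toLp] using h

end GMRES

/-- For A Hermitian positive definite, r₀ ≠ 0 and m ≥ 1, the GMRES residual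
r_m = r₀ − A Δf* after one restart cycle of length m satisfies
‖r_m‖² = ‖r₀‖² − ‖A Δf*‖², and ‖r_m‖²/‖r₀‖² ≤ 1 − ε_m with
ε_m = Σ_{j=1}^m |r̄₀ᴴ Aʲ r̄₀|² / tr(K̄ᴴK̄) > 0; hence the residual norm strictly
decreases at each restart cycle. -/
theorem restarted_gmres_decrease {n : ℕ} (A : Matrix (Fin n) (Fin n) ℂ)
    (hA : A.PosDef) (r₀ : Fin n → ℂ) (hr₀ : r₀ ≠ 0) (m : ℕ) (hm : 1 ≤ m)
    (Δf : Fin n → ℂ)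
    (hmem : Δf ∈ Submodule.span ℂ (Set.range fun i : Fin m => (A ^ (i : ℕ)) *ᵥ r₀))
    (hopt : ∀ g ∈ Submodule.span ℂ (Set.range fun i : Fin m => (A ^ (i : ℕ)) *ᵥ r₀),
      enorm' (r₀ - A *ᵥ Δf) ≤ enorm' (r₀ - A *ᵥ g)) :
    (enorm' (r₀ - A *ᵥ Δf)) ^ 2 = (enorm' r₀) ^ 2 - (enorm' (A *ᵥ Δf)) ^ 2 ∧
    (0 < (∑ j ∈ Finset.Icc 1 m,
          ‖star (((enorm' r₀ : ℂ))⁻¹ • r₀) ⬝ᵥ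
            (A ^ j) *ᵥ (((enorm' r₀ : ℂ))⁻¹ • r₀)‖ ^ 2) /
        (∑ j ∈ Finset.Icc 1 m, (enorm' ((A ^ j) *ᵥ (((enorm' r₀ : ℂ))⁻¹ • r₀))) ^ 2)) ∧
    ((enorm' (r₀ - A *ᵥ Δf)) ^ 2 / (enorm' r₀) ^ 2 ≤
      1 - (∑ j ∈ Finset.Icc 1 m,
          ‖star (((enorm' r₀ : ℂ))⁻¹ • r₀) ⬝ᵥ
            (A ^ j) *ᵥ (((enorm' r₀ : ℂ))⁻¹ • r₀)‖ ^ 2) /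
        (∑ j ∈ Finset.Icc 1 m, (enorm' ((A ^ j) *ᵥ (((enorm' r₀ : ℂ))⁻¹ • r₀))) ^ 2)) ∧
    enorm' (r₀ - A *ᵥ Δf) < enorm' r₀ := by
  have hc : 0 < enorm' r₀ := by simpa [enorm'_eq_norm_toLp] using hr₀
  have hres := gmres_residual_norm_sq hmem hopt
  have hbound := gmres_sum_norm_sq_le hmem hopt (enorm' r₀ : ℂ)⁻¹
  have hN := hA.sum_norm_star_dotProduct_pow_mulVec_sq_pos
    (x := (enorm' r₀ : ℂ)⁻¹ • r₀) (by simp [hc.ne', hr₀]) hm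
  rw [norm_inv, Complex.norm_real, Real.norm_of_nonneg hc.le] at hbound
  set N := ∑ j ∈ Finset.Icc 1 m, ‖star (((enorm' r₀ : ℂ))⁻¹ • r₀) ⬝ᵥ
    (A ^ j) *ᵥ (((enorm' r₀ : ℂ))⁻¹ • r₀)‖ ^ 2
  set D := ∑ j ∈ Finset.Icc 1 m, (enorm' ((A ^ j) *ᵥ (((enorm' r₀ : ℂ))⁻¹ • r₀))) ^ 2
  have hD : 0 < D := pos_of_mul_pos_right (hN.trans_le hbound) (sq_nonneg _)
  rw [inv_mul_eq_div] at hbound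
  have hratio : N / D ≤ (enorm' (A *ᵥ Δf) / enorm' r₀) ^ 2 := (div_le_iff₀ hD).2 hbound
  have he : 0 < enorm' (A *ᵥ Δf) ^ 2 := by
    have := (div_pos hN hD).trans_le hratio
    rwa [div_pow, div_pos_iff_of_pos_right (by positivity)] at this
  refine ⟨hres, div_pos hN hD, ?_, ?_⟩
  · rw [hres, sub_div, div_self (by positivity), ← div_pow]
    linarith
  · exact lt_of_pow_lt_pow_left₀ 2 hc.le (by linarith)
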